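/- arXiv:2009.00943 — 4 statements merged into one kernel-verified Lean document; each statement's English description precedes it below -/
import Mathlib

section
/- For a t-definer ⋆ with residuum ⇒, a ⋆ (a ⇒ b) = max{a, b} for all a, b ≥ 0. -/
/-!
The residuum `a ⇒ b` is the least `c` with `b ≤ c ⋆ a`; this least point exists because
`c ↦ c ⋆ a` is continuous, so the set of such `c` is closed. If `a < b`, the intermediate value
theorem on `[0, a ⇒ b]` produces a point where `c ⋆ a` equals `b`, which by minimality is `a ⇒ b`
itself; if `b ≤ a`, then `0` already qualifies since `0 ⋆ a = a`.
-/

open NNReal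

/-- The residuum of a binary operation on `[0,∞)`. -/
noncomputable def resid (f : ℝ≥0 → ℝ≥0 → ℝ≥0) (a b : ℝ≥0) : ℝ≥0 :=
  sInf {c | b ≤ f c a}

section LeastPreimage

variable {α δ : Type*} [ConditionallyCompleteLinearOrderBot α] [TopologicalSpace α]
  [OrderTopology α] [DenselyOrdered α] [LinearOrder δ] [TopologicalSpace δ]
  [OrderClosedTopology δ] {g : α → δ} {b : δ}

theorem Continuous.apply_csInf_setOf_le_apply (hg : Continuous g) (hb : ∃ c, b ≤ g c) :
    g (sInf {c | b ≤ g c}) = max (g ⊥) b := by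
  set S := {c | b ≤ g c}
  have hS : sInf S ∈ S := (isClosed_Ici.preimage hg).csInf_mem hb (OrderBot.bddBelow S)
  rcases le_total b (g ⊥) with hb_le | hb_ge
  · have hbot : sInf S = ⊥ := le_bot_iff.mp (csInf_le (OrderBot.bddBelow S) hb_le)
    rw [hbot, max_eq_left hb_le]
  · obtain ⟨c, hc, hgc⟩ := intermediate_value_Icc bot_le hg.continuousOn ⟨hb_ge, hS⟩
    have hc_eq : c = sInf S := le_antisymm hc.2 (csInf_le (OrderBot.bddBelow S) hgc.ge)
    rw [← hc_eq, hgc, max_eq_right hb_ge]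

end LeastPreimage

theorem star_resid_eq_max_general
    (f : ℝ≥0 → ℝ≥0 → ℝ≥0)
    (hcomm : ∀ a b, f a b = f b a)
    (hmono : ∀ a b c, a ≤ b → f a c ≤ f b c)
    (hzero : ∀ a, f a 0 = a)
    (hcont : ∀ b, Continuous fun a => f a b) :
    ∀ a b, f a (resid f a b) = max a b := by
  intro a b
  have hzero_left : ∀ c, f 0 c = c := fun c => by rw [hcomm, hzero]
  have hb : b ≤ f b a :=
    calc b = f 0 b := (hzero_left b).symm
      _ ≤ f a b := hmono _ _ _ zero_le
      _ = f b a := hcomm a b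
  rw [hcomm, resid, (hcont a).apply_csInf_setOf_le_apply ⟨b, hb⟩, bot_eq_zero, hzero_left]

/-- `a ⋆ (a ⇒ b) = max{a,b}`. -/
theorem star_resid_eq_max
    (f : ℝ≥0 → ℝ≥0 → ℝ≥0)
    (hcomm : ∀ a b, f a b = f b a)
    (hassoc : ∀ a b c, f a (f b c) = f (f a b) c)
    (hmono : ∀ a b c, a ≤ b → f a c ≤ f b c)
    (hzero : ∀ a, f a 0 = a)
    (hcont : ∀ b, Continuous fun a => f a b) :
    ∀ a b, f a (resid f a b) = max a b :=
  star_resid_eq_max_general f hcomm hmono hzero hcont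
end

section
/- For any t-definer ⋆ with residuum ⇒, the function d(a,b) = (a ⇒ b) ⋆ (b ⇒ a) defines a ⋆-metric on [0,∞): it is symmetric, vanishes exactly on the diagonal, and satisfies d(a,b) ≤ d(a,c) ⋆ d(c,b). -/
open NNReal

/-!
Continuity of `⋆` in its first argument makes the infimum defining `a ⇒ b` a minimum, so `⇒` is
right adjoint to `⋆`: `a ⇒ b ≤ c ↔ b ≤ c ⋆ a`. Hence `a ⇒ b = 0` iff `b ≤ a`, and the residuum
satisfies its own triangle inequality `x ⇒ y ≤ (z ⇒ y) ⋆ (x ⇒ z)`. Combining two instances of it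
by monotonicity and rearranging with commutativity and associativity gives the `⋆`-triangle
inequality for `d`.
-/

namespace TDefiner

variable {f : ℝ≥0 → ℝ≥0 → ℝ≥0}

theorem star_le_star (hcomm : ∀ a b, f a b = f b a) (hmono : ∀ a b c, a ≤ b → f a c ≤ f b c)
    {a b c d : ℝ≥0} (hab : a ≤ b) (hcd : c ≤ d) : f a c ≤ f b d :=
  calc f a c ≤ f b c := hmono a b c hab
    _ = f c b := hcomm b c
    _ ≤ f d b := hmono c d b hcd
    _ = f b d := hcomm d b

theorem le_star_right (hcomm : ∀ a b, f a b = f b a) (hmono : ∀ a b c, a ≤ b → f a c ≤ f b c)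
    (hzero : ∀ a, f a 0 = a) (a b : ℝ≥0) : a ≤ f a b :=
  calc a = f a 0 := (hzero a).symm
    _ ≤ f a b := star_le_star hcomm hmono le_rfl zero_le

theorem star_eq_zero_iff (hcomm : ∀ a b, f a b = f b a) (hmono : ∀ a b c, a ≤ b → f a c ≤ f b c)
    (hzero : ∀ a, f a 0 = a) {a b : ℝ≥0} : f a b = 0 ↔ a = 0 ∧ b = 0 := by
  constructor
  · intro h
    exact ⟨nonpos_iff_eq_zero.mp (h ▸ le_star_right hcomm hmono hzero a b),
      nonpos_iff_eq_zero.mp (h ▸ hcomm b a ▸ le_star_right hcomm hmono hzero b a)⟩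
  · rintro ⟨rfl, rfl⟩
    exact hzero 0

theorem star_star_star_comm (hcomm : ∀ a b, f a b = f b a)
    (hassoc : ∀ a b c, f a (f b c) = f (f a b) c) (a b c d : ℝ≥0) :
    f (f a b) (f c d) = f (f a c) (f b d) := by
  rw [← hassoc, hassoc b, hcomm b c, ← hassoc c, hassoc]

theorem le_star_resid (hcomm : ∀ a b, f a b = f b a) (hmono : ∀ a b c, a ≤ b → f a c ≤ f b c)
    (hzero : ∀ a, f a 0 = a) (hcont : ∀ b, Continuous fun a => f a b) (a b : ℝ≥0) :
    b ≤ f (resid f a b) a :=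
  (isClosed_le continuous_const (hcont a)).csInf_mem ⟨b, le_star_right hcomm hmono hzero b a⟩
    (OrderBot.bddBelow _)

theorem resid_le_iff (hcomm : ∀ a b, f a b = f b a) (hmono : ∀ a b c, a ≤ b → f a c ≤ f b c)
    (hzero : ∀ a, f a 0 = a) (hcont : ∀ b, Continuous fun a => f a b) {a b c : ℝ≥0} :
    resid f a b ≤ c ↔ b ≤ f c a :=
  ⟨fun h => (le_star_resid hcomm hmono hzero hcont a b).trans (hmono _ _ _ h),
    fun h => csInf_le (OrderBot.bddBelow _) h⟩

theorem resid_eq_zero_iff (hcomm : ∀ a b, f a b = f b a)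
    (hmono : ∀ a b c, a ≤ b → f a c ≤ f b c) (hzero : ∀ a, f a 0 = a)
    (hcont : ∀ b, Continuous fun a => f a b) {a b : ℝ≥0} : resid f a b = 0 ↔ b ≤ a := by
  rw [← nonpos_iff_eq_zero, resid_le_iff hcomm hmono hzero hcont, hcomm, hzero]

theorem resid_le_star_resid (hcomm : ∀ a b, f a b = f b a)
    (hassoc : ∀ a b c, f a (f b c) = f (f a b) c) (hmono : ∀ a b c, a ≤ b → f a c ≤ f b c)
    (hzero : ∀ a, f a 0 = a) (hcont : ∀ b, Continuous fun a => f a b) (x y z : ℝ≥0) :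
    resid f x y ≤ f (resid f z y) (resid f x z) := by
  rw [resid_le_iff hcomm hmono hzero hcont, ← hassoc]
  calc y ≤ f (resid f z y) z := le_star_resid hcomm hmono hzero hcont z y
    _ ≤ f (resid f z y) (f (resid f x z) x) :=
      star_le_star hcomm hmono le_rfl (le_star_resid hcomm hmono hzero hcont x z)

end TDefiner

open TDefiner

/-- `d(a,b) = (a ⇒ b) ⋆ (b ⇒ a)` is a `⋆`-metric on `[0,∞)`. -/
theorem resid_dist_is_starMetric
    (f : ℝ≥0 → ℝ≥0 → ℝ≥0)
    (hcomm : ∀ a b, f a b = f b a)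
    (hassoc : ∀ a b c, f a (f b c) = f (f a b) c)
    (hmono : ∀ a b c, a ≤ b → f a c ≤ f b c)
    (hzero : ∀ a, f a 0 = a)
    (hcont : ∀ b, Continuous fun a => f a b) :
    (∀ a b, f (resid f a b) (resid f b a) = f (resid f b a) (resid f a b)) ∧
    (∀ a b, f (resid f a b) (resid f b a) = 0 ↔ a = b) ∧
    (∀ a b c, f (resid f a b) (resid f b a) ≤
      f (f (resid f a c) (resid f c a)) (f (resid f c b) (resid f b c))) := by
  have resid_zero := fun a b => resid_eq_zero_iff (a := a) (b := b) hcomm hmono hzero hcont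
  have tri := resid_le_star_resid hcomm hassoc hmono hzero hcont
  refine ⟨fun a b => hcomm _ _, fun a b => ?_, fun a b c => ?_⟩
  · rw [star_eq_zero_iff hcomm hmono hzero, resid_zero, resid_zero, le_antisymm_iff, and_comm]
  · calc f (resid f a b) (resid f b a)
        ≤ f (f (resid f c b) (resid f a c)) (f (resid f c a) (resid f b c)) :=
          star_le_star hcomm hmono (tri a b c) (tri b a c)
      _ = f (f (resid f a c) (resid f c a)) (f (resid f c b) (resid f b c)) := by
          rw [hcomm (resid f c b), star_star_star_comm hcomm hassoc]
end

section
/- For the t-definer ⋆_s(a,b) = √(a² + b²), its residuum is a ⇒ b = √(b² − a²) when a < b and 0 when a ≥ b; consequently d_s(a,b) = √|b² − a²| is a ⋆_s-metric on [0,∞). -/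
open NNReal

/-!
For `⋆ₛ` the condition `b ≤ c ⋆ₛ a` reads `b² - a² ≤ c²`, so the set defining `a ⇒ b` is the
ray `[√(b² - a²), ∞)`. The function `dₛ` is the square root of the ordinary distance between
squares, `dₛ(a,b) = √(nndist a² b²)`; squaring turns the `⋆ₛ`-triangle inequality into the
triangle inequality of `nndist`.
-/

theorem resid_eq_of_le_iff {f : ℝ≥0 → ℝ≥0 → ℝ≥0} {a b r : ℝ≥0}
    (h : ∀ c, b ≤ f c a ↔ r ≤ c) : resid f a b = r := by
  rw [resid, show {c | b ≤ f c a} = Set.Ici r from Set.ext h, csInf_Ici]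

theorem resid_sqrt_sq_add (a b : ℝ≥0) :
    resid (fun a b => NNReal.sqrt (a ^ 2 + b ^ 2)) a b = NNReal.sqrt (b ^ 2 - a ^ 2) :=
  resid_eq_of_le_iff fun c => by
    simp only [NNReal.le_sqrt_iff_sq_le, NNReal.sqrt_le_iff_le_sq, tsub_le_iff_right]

theorem NNReal.tsub_sup_tsub_eq_nndist (x y : ℝ≥0) : (y - x) ⊔ (x - y) = nndist x y := by
  rw [NNReal.nndist_eq, max_comm]

theorem NNReal.sqrt_nndist_le_sqrt_sq_add {α : Type*} [PseudoMetricSpace α] (x y z : α) :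
    NNReal.sqrt (nndist x y) ≤
      NNReal.sqrt (NNReal.sqrt (nndist x z) ^ 2 + NNReal.sqrt (nndist z y) ^ 2) := by
  rw [NNReal.sq_sqrt, NNReal.sq_sqrt, NNReal.sqrt_le_sqrt]
  exact nndist_triangle x z y

/-- For `⋆ₛ(a,b) = √(a²+b²)` the residuum is `a ⇒ b = √(b²−a²)` for `a < b`
and `0` for `a ≥ b`; consequently `dₛ(a,b) = √|b²−a²|` is a `⋆ₛ`-metric. -/
theorem starS_resid_and_metric :
    let f : ℝ≥0 → ℝ≥0 → ℝ≥0 := fun a b => NNReal.sqrt (a ^ 2 + b ^ 2)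
    let d : ℝ≥0 → ℝ≥0 → ℝ≥0 := fun a b => NNReal.sqrt ((b ^ 2 - a ^ 2) ⊔ (a ^ 2 - b ^ 2))
    (∀ a b, resid f a b = if a < b then NNReal.sqrt (b ^ 2 - a ^ 2) else 0) ∧
    (∀ a b, d a b = 0 ↔ a = b) ∧
    (∀ a b, d a b = d b a) ∧
    (∀ a b c, d a b ≤ f (d a c) (d c b)) := by
  intro f d
  have hd : ∀ a b, d a b = NNReal.sqrt (nndist (a ^ 2) (b ^ 2)) := fun a b =>
    congrArg NNReal.sqrt (NNReal.tsub_sup_tsub_eq_nndist _ _)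
  refine ⟨fun a b => ?_, fun a b => ?_, fun a b => ?_, fun a b c => ?_⟩
  · rw [resid_sqrt_sq_add]
    split_ifs with hab
    · rfl
    · rw [tsub_eq_zero_of_le (pow_le_pow_left₀ zero_le (not_lt.mp hab) 2), NNReal.sqrt_zero]
  · rw [hd, NNReal.sqrt_eq_zero, nndist_eq_zero, pow_left_inj₀ zero_le zero_le two_ne_zero]
  · rw [hd, hd, nndist_comm]
  · simp only [hd, f]
    exact NNReal.sqrt_nndist_le_sqrt_sq_add _ _ _
end

section
/- For every ⋆-metric space (M, d), the collection of open sets (sets each of whose points has an open ball around it contained in the set) forms a Hausdorff topology on M. The key step: for distinct a, b there exists s > 0 with s ⋆ s < d(a,b), since continuity of ⋆ would otherwise force d(a,b) = 0. -/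
/-!
Continuity of `⋆` at `0` (where `a ⋆ 0 = a`) makes `a ⋆ ε < r` for small `ε` whenever `a < r`.
This makes open balls open: a point `x` of `N_r(c)` has a ball `N_ε(x) ⊆ N_r(c)` by the triangle
inequality. Applied to `a = r / 2` together with monotonicity (`s ⋆ s ≤ (r / 2) ⋆ s` for
`s ≤ r / 2`), it also gives `s > 0` with `s ⋆ s < r`; for `r = d(a, b)` the balls of radius `s`
around `a` and `b` are then disjoint, again by the triangle inequality.
-/

open NNReal Filter Topology

section StarOperation

variable {f : ℝ≥0 → ℝ≥0 → ℝ≥0}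

theorem eventually_star_lt (hcomm : ∀ a b, f a b = f b a) (hzero : ∀ a, f a 0 = a)
    (hcont : ∀ b, Continuous fun a => f a b) {a r : ℝ≥0} (h : a < r) :
    ∀ᶠ s in 𝓝 0, f a s < r := by
  have hcont' : Continuous fun s => f a s := by simpa only [hcomm a] using hcont a
  exact hcont'.continuousAt.eventually_lt continuousAt_const (by rwa [hzero])

theorem exists_pos_star_self_lt (hcomm : ∀ a b, f a b = f b a)
    (hmono : ∀ a b c, a ≤ b → f a c ≤ f b c) (hzero : ∀ a, f a 0 = a)
    (hcont : ∀ b, Continuous fun a => f a b) {r : ℝ≥0} (hr : 0 < r) :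
    ∃ s, 0 < s ∧ f s s < r := by
  have hhalf : 0 < r / 2 := half_pos hr
  have hsmall : ∀ᶠ s in 𝓝[>] 0, f (r / 2) s < r ∧ s ≤ r / 2 :=
    nhdsWithin_le_nhds <|
      (eventually_star_lt hcomm hzero hcont (half_lt_self hr.ne')).and (eventually_le_nhds hhalf)
  obtain ⟨s, ⟨hlt, hle⟩, hs⟩ := (hsmall.and self_mem_nhdsWithin).exists
  exact ⟨s, hs, (hmono s (r / 2) s hle).trans_lt hlt⟩

end StarOperation

section BallTopology

variable {M : Type*}

@[reducible]
def ballTopology (d : M → M → ℝ≥0) : TopologicalSpace M where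
  IsOpen A := ∀ x ∈ A, ∃ ε : ℝ≥0, 0 < ε ∧ {y | d x y < ε} ⊆ A
  isOpen_univ _ _ := ⟨1, one_pos, Set.subset_univ _⟩
  isOpen_inter A B hA hB x hx := by
    obtain ⟨ε₁, hε₁, hA⟩ := hA x hx.1
    obtain ⟨ε₂, hε₂, hB⟩ := hB x hx.2
    exact ⟨min ε₁ ε₂, lt_min hε₁ hε₂, fun y (hy : d x y < min ε₁ ε₂) =>
      ⟨hA (lt_min_iff.mp hy).1, hB (lt_min_iff.mp hy).2⟩⟩
  isOpen_sUnion S hS := by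
    rintro x ⟨A, hAS, hxA⟩
    obtain ⟨ε, hε, hball⟩ := hS A hAS x hxA
    exact ⟨ε, hε, fun y hy => ⟨A, hAS, hball hy⟩⟩

variable {f : ℝ≥0 → ℝ≥0 → ℝ≥0} {d : M → M → ℝ≥0}

theorem isOpen_ballTopology_ball (hcomm : ∀ a b, f a b = f b a) (hzero : ∀ a, f a 0 = a)
    (hcont : ∀ b, Continuous fun a => f a b) (hdtri : ∀ x y z, d x y ≤ f (d x z) (d z y))
    (c : M) (r : ℝ≥0) : (ballTopology d).IsOpen {y | d c y < r} := by
  intro x hx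
  obtain ⟨ε, hε, hball⟩ :=
    NNReal.nhds_zero_basis.mem_iff.mp (eventually_star_lt hcomm hzero hcont hx)
  exact ⟨ε, hε, fun y hy => (hdtri c y x).trans_lt (hball hy)⟩

theorem t2Space_ballTopology (hcomm : ∀ a b, f a b = f b a)
    (hmono : ∀ a b c, a ≤ b → f a c ≤ f b c) (hzero : ∀ a, f a 0 = a)
    (hcont : ∀ b, Continuous fun a => f a b) (hd0 : ∀ x y, d x y = 0 ↔ x = y)
    (hdsymm : ∀ x y, d x y = d y x) (hdtri : ∀ x y z, d x y ≤ f (d x z) (d z y)) :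
    @T2Space M (ballTopology d) := by
  refine @T2Space.mk M (ballTopology d) fun a b hab => ?_
  obtain ⟨s, hs, hss⟩ := exists_pos_star_self_lt hcomm hmono hzero hcont
    (pos_iff_ne_zero.mpr (mt (hd0 a b).mp hab))
  have hcentre : ∀ c, c ∈ {y | d c y < s} := fun c => by simpa [(hd0 c c).mpr rfl] using hs
  refine ⟨_, _, isOpen_ballTopology_ball hcomm hzero hcont hdtri a s,
    isOpen_ballTopology_ball hcomm hzero hcont hdtri b s, hcentre a, hcentre b,
    Set.disjoint_left.mpr fun z (hza : d a z < s) (hzb : d b z < s) => hss.not_ge ?_⟩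
  calc d a b ≤ f (d a z) (d z b) := hdtri a b z
    _ ≤ f s (d z b) := hmono _ _ _ hza.le
    _ = f (d b z) s := by rw [hcomm, hdsymm]
    _ ≤ f s s := hmono _ _ _ hzb.le

end BallTopology

theorem starMetric_topology_hausdorff_general {M : Type*}
    (f : ℝ≥0 → ℝ≥0 → ℝ≥0)
    (hcomm : ∀ a b, f a b = f b a)
    (hmono : ∀ a b c, a ≤ b → f a c ≤ f b c)
    (hzero : ∀ a, f a 0 = a)
    (hcont : ∀ b, Continuous fun a => f a b)
    (d : M → M → ℝ≥0)
    (hd0 : ∀ x y, d x y = 0 ↔ x = y)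
    (hdsymm : ∀ x y, d x y = d y x)
    (hdtri : ∀ x y z, d x y ≤ f (d x z) (d z y)) :
    (∀ a b : M, a ≠ b → ∃ s : ℝ≥0, 0 < s ∧ f s s < d a b) ∧
    ∃ t : TopologicalSpace M,
      (∀ A : Set M, t.IsOpen A ↔ ∀ x ∈ A, ∃ ε : ℝ≥0, 0 < ε ∧ {y | d x y < ε} ⊆ A) ∧
      @T2Space M t :=
  ⟨fun a b hab => exists_pos_star_self_lt hcomm hmono hzero hcont
      (pos_iff_ne_zero.mpr (mt (hd0 a b).mp hab)),
    ballTopology d, fun _ => Iff.rfl,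
    t2Space_ballTopology hcomm hmono hzero hcont hd0 hdsymm hdtri⟩

/-- For every `⋆`-metric space `(M,d)`, the open sets form a Hausdorff
topology on `M`.  Key step: for distinct `a,b` there is `s > 0` with
`s ⋆ s < d a b`. -/
theorem starMetric_topology_hausdorff {M : Type*}
    (f : ℝ≥0 → ℝ≥0 → ℝ≥0)
    (hcomm : ∀ a b, f a b = f b a)
    (hassoc : ∀ a b c, f a (f b c) = f (f a b) c)
    (hmono : ∀ a b c, a ≤ b → f a c ≤ f b c)
    (hzero : ∀ a, f a 0 = a)
    (hcont : ∀ b, Continuous fun a => f a b)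
    (d : M → M → ℝ≥0)
    (hd0 : ∀ x y, d x y = 0 ↔ x = y)
    (hdsymm : ∀ x y, d x y = d y x)
    (hdtri : ∀ x y z, d x y ≤ f (d x z) (d z y)) :
    (∀ a b : M, a ≠ b → ∃ s : ℝ≥0, 0 < s ∧ f s s < d a b) ∧
    ∃ t : TopologicalSpace M,
      (∀ A : Set M, t.IsOpen A ↔ ∀ x ∈ A, ∃ ε : ℝ≥0, 0 < ε ∧ {y | d x y < ε} ⊆ A) ∧
      @T2Space M t :=
  starMetric_topology_hausdorff_general f hcomm hmono hzero hcont d hd0 hdsymm hdtri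
end
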